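/- arXiv:2204.07839 — 2 statements merged into one kernel-verified Lean document; each statement's English description precedes it below -/
import Mathlib

section
/- Uniqueness and explicit form of the timing map: let (S,g) be a dynamical system. (i) Any two timing maps on (S,g) are equal. (ii) If (S,g) is timed, then its unique timing map τ is given by τ(s) = sup{n∈ℕ : ∃w∈S, gⁿ(w)=s}, the supremum taken in ℕ∪{∞}. -/
/-- A timing map on a dynamical system `(S, g)`: it assigns `0` to every initial state (a state
not in the range of `g`), and satisfies `τ(g(s)) = τ(s) + 1` (with `∞ + 1 = ∞`). -/
def IsTimingMap {S : Type} (g : S → S) (τ : S → ℕ∞) : Prop :=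
  (∀ s, (∀ w, g w ≠ s) → τ s = 0) ∧ ∀ s, τ (g s) = τ s + 1

lemma timing_shift {S : Type} {g : S → S} {τ : S → ℕ∞} (h : IsTimingMap g τ) :
    ∀ (n : ℕ) (s : S), τ (g^[n] s) = τ s + n := by
  intro n
  induction n with
  | zero => simp
  | succ n ih =>
    intro s
    rw [Function.iterate_succ_apply', h.2, ih]
    push_cast
    ring

lemma timing_reach {S : Type} {g : S → S} {τ : S → ℕ∞} (h : IsTimingMap g τ) :
    ∀ (n : ℕ) (s : S), (n : ℕ∞) ≤ τ s → ∃ w, g^[n] w = s := by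
  intro n
  induction n with
  | zero => exact fun s _ => ⟨s, rfl⟩
  | succ n ih =>
    intro s hs
    have h0 : τ s ≠ 0 := by
      intro h0
      rw [h0, Nat.cast_succ, nonpos_iff_eq_zero] at hs
      simp at hs
    have hex : ∃ w, g w = s := by
      by_contra hc
      push_neg at hc
      exact h0 (h.1 s hc)
    obtain ⟨w, hw⟩ := hex
    have hτ : τ s = τ w + 1 := by rw [← hw, h.2]
    have hn : (n : ℕ∞) ≤ τ w := by
      rw [hτ, Nat.cast_succ] at hs
      exact (WithTop.add_le_add_iff_right (by simp : (1 : ℕ∞) ≠ ⊤)).mp hs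
    obtain ⟨v, hv⟩ := ih w hn
    exact ⟨v, by rw [Function.iterate_succ_apply', hv, hw]⟩

lemma timing_explicit {S : Type} {g : S → S} {τ : S → ℕ∞} (h : IsTimingMap g τ) (s : S) :
    τ s = ⨆ n ∈ {n : ℕ | ∃ w, g^[n] w = s}, (n : ℕ∞) := by
  apply le_antisymm
  · cases hτ : τ s with
    | top =>
      rw [top_le_iff, iSup_eq_top]
      intro b hb
      lift b to ℕ using hb.ne
      obtain ⟨w, hw⟩ := timing_reach h (b + 1) s (by rw [hτ]; exact le_top)
      refine ⟨b + 1, ?_⟩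
      rw [iSup_pos (show b + 1 ∈ {n : ℕ | ∃ w, g^[n] w = s} from ⟨w, hw⟩)]
      exact_mod_cast Nat.lt_succ_self b
    | coe m =>
      obtain ⟨w, hw⟩ := timing_reach h m s (le_of_eq hτ.symm)
      exact le_iSup₂ (f := fun (n : ℕ) (_ : n ∈ {n : ℕ | ∃ w, g^[n] w = s}) => (n : ℕ∞)) m ⟨w, hw⟩
  · refine iSup₂_le fun n hn => ?_
    obtain ⟨w, hw⟩ := hn
    calc (n : ℕ∞) ≤ τ w + n := le_add_self
    _ = τ (g^[n] w) := (timing_shift h n w).symm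
    _ = τ s := by rw [hw]

/-- **Uniqueness and explicit form of the timing map**: (i) any two timing maps on a dynamical
system `(S, g)` coincide; (ii) if `(S, g)` is timed, its unique timing map is given by
`τ(s) = sup {n ∈ ℕ : ∃ w, gⁿ(w) = s}`, the supremum taken in `ℕ ∪ {∞}`. -/
theorem timing_map_unique_and_explicit {S : Type} (g : S → S) :
    (∀ τ₁ τ₂ : S → ℕ∞, IsTimingMap g τ₁ → IsTimingMap g τ₂ → τ₁ = τ₂) ∧
    (∀ τ : S → ℕ∞, IsTimingMap g τ →
      ∀ s, τ s = ⨆ n ∈ {n : ℕ | ∃ w, g^[n] w = s}, (n : ℕ∞)) := by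
  constructor
  · intro τ₁ τ₂ h₁ h₂
    funext s
    rw [timing_explicit h₁ s, timing_explicit h₂ s]
  · exact fun τ h s => timing_explicit h s
end

section
/- Characterization of timed dynamical systems: for every dynamical system (S,g) the following are equivalent: (1) (S,g) is timed; (2) for every n∈ℕ, whenever g(s)=g^{n+1}(w) there exists w'∈S with s=gⁿ(w'); (3) all maximal g-histories of the same state have the same length; (4) there exists an equivalence relation ≈ on S satisfying the two synchronicity conditions: s≈w if and only if g(s)≈g(w), and whenever s≈g(w) there exists w'∈S with s=g(w'). -/
/-- `s` has a maximal `g`-history of length `l ∈ ℕ∞`: either `l = m` is finite and there is a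
backward transition chain `s = s₀, s₁, …, s_m` with `s_n = g(s_{n+1})` whose last state `s_m`
is not in the range of `g`, or `l = ∞` and there is an infinite backward transition chain. -/
def HasMaxHistLen {S : Type} (g : S → S) (s : S) (l : ℕ∞) : Prop :=
  (∃ m : ℕ, l = (m : ℕ∞) ∧ ∃ h : ℕ → S, h 0 = s ∧ (∀ n < m, h n = g (h (n + 1))) ∧
    ∀ w, g w ≠ h m) ∨
  (l = ⊤ ∧ ∃ h : ℕ → S, h 0 = s ∧ ∀ n, h n = g (h (n + 1)))

/-!
A timing map is forced: `τ s ≥ n` exactly when `s` lies in the image of `gⁿ`, so the only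
candidate is the depth `s ↦ sup {n | s ∈ gⁿ(S)}`. It satisfies `τ (g s) = τ s + 1` precisely when
every predecessor of a point of `gⁿ⁺¹(S)` lies in `gⁿ(S)`. Along a maximal history of length `l` a
timing map drops by one per step down to `0` (or forever), so `l = τ s`. Conversely, maximal
histories exist (keep choosing preimages), and if their lengths are unique, the length is a timing
map, since prepending `g s` to a maximal history of `s` gives one of `g s`. Finally the level sets
of a timing map are a synchronous equivalence, and a synchronous equivalence lets one pull
`s ≈ gⁿ w` back step by step to exhibit `s` as an `n`-fold successor.
-/

open Function

variable {S : Type} {g : S → S}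

lemma exists_eq_iterate_of_le {m n : ℕ} (hmn : m ≤ n) {s : S} (hs : ∃ w, s = g^[n] w) :
    ∃ w, s = g^[m] w := by
  obtain ⟨w, rfl⟩ := hs
  exact ⟨g^[n - m] w, by rw [← iterate_add_apply, Nat.add_sub_cancel' hmn]⟩

lemma eq_iterate_of_history {h : ℕ → S} {n : ℕ} (hstep : ∀ k < n, h k = g (h (k + 1))) :
    h 0 = g^[n] (h n) := by
  induction n with
  | zero => rfl
  | succ n ih =>
    rw [ih fun k hk => hstep k (by omega), hstep n (by omega), iterate_succ_apply]

namespace IsTimingMap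

variable {τ : S → ℕ∞} (hτ : IsTimingMap g τ)
include hτ

lemma apply_iterate (n : ℕ) (w : S) : τ (g^[n] w) = τ w + n := by
  induction n with
  | zero => simp
  | succ n ih => rw [iterate_succ_apply', hτ.2, ih, Nat.cast_succ, add_assoc]

lemma natCast_le_iff {n : ℕ} {s : S} : (n : ℕ∞) ≤ τ s ↔ ∃ w, s = g^[n] w := by
  induction n generalizing s with
  | zero => simp
  | succ n ih =>
    refine ⟨fun hn => ?_, fun ⟨w, hw⟩ => hw ▸ hτ.apply_iterate (n + 1) w ▸ le_add_self⟩
    obtain ⟨w, rfl⟩ : ∃ w, g w = s := by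
      by_contra! hs
      simp [hτ.1 s hs] at hn
    rw [hτ.2, Nat.cast_succ, ENat.add_le_add_iff_right ENat.one_ne_top, ih] at hn
    obtain ⟨u, rfl⟩ := hn
    exact ⟨u, (iterate_succ_apply' g n u).symm⟩

lemma exists_eq_iterate_of_apply_eq {n : ℕ} {s w : S} (hw : g s = g^[n + 1] w) :
    ∃ w', s = g^[n] w' := by
  have : τ s + 1 = τ w + n + 1 := by
    rw [← hτ.2, hw, hτ.apply_iterate, Nat.cast_succ, add_assoc]
  rw [← hτ.natCast_le_iff, ENat.add_left_injective_of_ne_top ENat.one_ne_top this]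
  exact le_add_self

lemma apply_eq_apply_iff {s w : S} : τ (g s) = τ (g w) ↔ τ s = τ w := by
  rw [hτ.2, hτ.2, (ENat.add_left_injective_of_ne_top ENat.one_ne_top).eq_iff]

lemma exists_eq_apply_of_eq_apply {s w : S} (hsw : τ s = τ (g w)) : ∃ w', s = g w' := by
  simpa using hτ.natCast_le_iff (n := 1).1 (by rw [hsw, hτ.2]; exact le_add_self)

lemma eq_of_hasMaxHistLen {s : S} {l : ℕ∞} (hl : HasMaxHistLen g s l) : l = τ s := by
  rcases hl with ⟨m, rfl, h, rfl, hstep, hlast⟩ | ⟨rfl, h, rfl, hstep⟩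
  · rw [eq_iterate_of_history hstep, hτ.apply_iterate, hτ.1 _ hlast, zero_add]
  · refine (ENat.eq_top_iff_forall_ge.2 fun n => ?_).symm
    rw [eq_iterate_of_history fun k _ => hstep k, hτ.apply_iterate]
    exact le_add_self

end IsTimingMap

variable (g) in
noncomputable def depth (s : S) : ℕ∞ :=
  ⨆ (n : ℕ) (_ : ∃ w, s = g^[n] w), (n : ℕ∞)

lemma natCast_le_depth_iff {k : ℕ} {s : S} : (k : ℕ∞) ≤ depth g s ↔ ∃ w, s = g^[k] w := by
  refine ⟨fun hk => ?_, fun hs => le_iSup₂ (f := fun n (_ : ∃ w, s = g^[n] w) => (n : ℕ∞)) k hs⟩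
  by_contra hs
  have hlt : ∀ n, (∃ w, s = g^[n] w) → n < k := fun n hn => by
    by_contra! hkn
    exact hs (exists_eq_iterate_of_le hkn hn)
  have : depth g s ≤ (k - 1 : ℕ) :=
    iSup₂_le fun n hn => Nat.cast_le.2 (by have := hlt n hn; omega)
  have hk0 := hlt 0 ⟨s, rfl⟩
  have : k ≤ k - 1 := Nat.cast_le.1 (hk.trans this)
  omega

lemma isTimingMap_depth (hpred : ∀ (n : ℕ) (s w : S), g s = g^[n + 1] w → ∃ w', s = g^[n] w') :
    IsTimingMap g (depth g) := by
  refine ⟨fun s hs => Order.lt_one_iff.1 (lt_of_not_ge fun h => ?_), fun s => ?_⟩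
  · obtain ⟨w, hw⟩ := natCast_le_depth_iff.1 (by exact_mod_cast h : ((1 : ℕ) : ℕ∞) ≤ depth g s)
    exact hs w hw.symm
  refine ENat.eq_of_forall_natCast_le_iff fun k => ?_
  cases k with
  | zero => simp
  | succ n =>
    rw [natCast_le_depth_iff, Nat.cast_succ, ENat.add_le_add_iff_right ENat.one_ne_top,
      natCast_le_depth_iff]
    exact ⟨fun ⟨w, hw⟩ => hpred n s w hw,
      fun ⟨w, hw⟩ => ⟨w, by rw [hw, iterate_succ_apply']⟩⟩

lemma hasMaxHistLen_zero {s : S} (hs : ∀ w, g w ≠ s) : HasMaxHistLen g s 0 :=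
  .inl ⟨0, rfl, fun _ => s, rfl, by simp, hs⟩

lemma HasMaxHistLen.apply {s : S} {l : ℕ∞} (hl : HasMaxHistLen g s l) :
    HasMaxHistLen g (g s) (l + 1) := by
  rcases hl with ⟨m, rfl, h, rfl, hstep, hlast⟩ | ⟨rfl, h, rfl, hstep⟩
  · refine .inl ⟨m + 1, by push_cast; rfl, Nat.rec (g (h 0)) fun n _ => h n, rfl, ?_, hlast⟩
    rintro (_ | n) hn
    · rfl
    · exact hstep n (by omega)
  · refine .inr ⟨top_add 1, Nat.rec (g (h 0)) fun n _ => h n, rfl, ?_⟩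
    rintro (_ | n)
    · rfl
    · exact hstep n

lemma exists_hasMaxHistLen (s : S) : ∃ l, HasMaxHistLen g s l := by
  classical
  have : Nonempty S := ⟨s⟩
  set h : ℕ → S := fun n => (invFun g)^[n] s
  have hstep : ∀ n, (∃ w, g w = h n) → h n = g (h (n + 1)) := fun n hn => by
    simp only [h, iterate_succ_apply']
    exact (invFun_eq hn).symm
  by_cases hall : ∀ n, ∃ w, g w = h n
  · exact ⟨⊤, .inr ⟨rfl, h, rfl, fun n => hstep n (hall n)⟩⟩
  · push Not at hall
    exact ⟨_, .inl ⟨Nat.find hall, rfl, h, rfl,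
      fun n hn => hstep n (by simpa using Nat.find_min hall hn), Nat.find_spec hall⟩⟩

lemma isTimingMap_of_hasMaxHistLen_unique
    (huniq : ∀ (s : S) (l₁ l₂ : ℕ∞), HasMaxHistLen g s l₁ → HasMaxHistLen g s l₂ → l₁ = l₂) :
    IsTimingMap g fun s => (exists_hasMaxHistLen (g := g) s).choose :=
  ⟨fun s hs => huniq s _ _ (exists_hasMaxHistLen s).choose_spec (hasMaxHistLen_zero hs),
    fun s => huniq (g s) _ _ (exists_hasMaxHistLen (g s)).choose_spec
      (exists_hasMaxHistLen s).choose_spec.apply⟩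

lemma exists_eq_iterate_of_rel_iterate {E : S → S → Prop}
    (hsync : ∀ s w, E s w ↔ E (g s) (g w)) (hpred : ∀ s w, E s (g w) → ∃ w', s = g w')
    {n : ℕ} {s t : S} (hst : E s (g^[n] t)) : ∃ w, s = g^[n] w := by
  induction n generalizing s with
  | zero => exact ⟨s, rfl⟩
  | succ n ih =>
    rw [iterate_succ_apply'] at hst
    obtain ⟨u, rfl⟩ := hpred s _ hst
    obtain ⟨w, rfl⟩ := ih ((hsync _ _).2 hst)
    exact ⟨w, (iterate_succ_apply' g n w).symm⟩

/-- **Characterization of timed dynamical systems**: `(S, g)` is timed iff every predecessor of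
an `(n+1)`-fold successor is an `n`-fold successor, iff all maximal `g`-histories of the same
state have the same length, iff there is an equivalence relation on `S` satisfying the two
synchronicity conditions. -/
theorem timed_characterization {S : Type} (g : S → S) :
    ((∃ τ, IsTimingMap g τ) ↔
      ∀ (n : ℕ) (s w : S), g s = g^[n + 1] w → ∃ w', s = g^[n] w') ∧
    ((∃ τ, IsTimingMap g τ) ↔
      ∀ (s : S) (l₁ l₂ : ℕ∞), HasMaxHistLen g s l₁ → HasMaxHistLen g s l₂ → l₁ = l₂) ∧
    ((∃ τ, IsTimingMap g τ) ↔
      ∃ E : S → S → Prop, Equivalence E ∧ (∀ s w, E s w ↔ E (g s) (g w)) ∧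
        ∀ s w, E s (g w) → ∃ w', s = g w') := by
  have timed_iff_pred : (∃ τ, IsTimingMap g τ) ↔
      ∀ (n : ℕ) (s w : S), g s = g^[n + 1] w → ∃ w', s = g^[n] w' :=
    ⟨fun ⟨_, hτ⟩ _ _ _ => hτ.exists_eq_iterate_of_apply_eq,
      fun hpred => ⟨_, isTimingMap_depth hpred⟩⟩
  refine ⟨timed_iff_pred, ⟨?_, fun huniq => ⟨_, isTimingMap_of_hasMaxHistLen_unique huniq⟩⟩,
    ⟨?_, ?_⟩⟩
  · rintro ⟨τ, hτ⟩ s l₁ l₂ h₁ h₂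
    rw [hτ.eq_of_hasMaxHistLen h₁, hτ.eq_of_hasMaxHistLen h₂]
  · rintro ⟨τ, hτ⟩
    exact ⟨fun s w => τ s = τ w, ⟨fun _ => rfl, Eq.symm, Eq.trans⟩,
      fun _ _ => hτ.apply_eq_apply_iff.symm, fun _ _ => hτ.exists_eq_apply_of_eq_apply⟩
  · rintro ⟨E, hE, hsync, hpred⟩
    refine timed_iff_pred.2 fun n s w hw =>
      exists_eq_iterate_of_rel_iterate hsync hpred (t := w) ?_
    rw [hsync, hw, iterate_succ_apply']
    exact hE.refl _
end
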